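/- arXiv:1508.07767 — 4 statements merged into one kernel-verified Lean document; each statement's English description precedes it below -/
import Mathlib

section
/- Let K ≥ 1 and let f = h + conj∘g ∈ S_H^0 be a K-quasiconformal harmonic mapping of 𝔻 onto a bounded Pommerenke interior domain G = f(𝔻). If G is a radial John disk, then ‖D_f‖ ∈ H¹_g(𝔻), i.e. sup_{0<r<1} ∫₀^{2π} (|h'(re^{iθ})| + |g'(re^{iθ})|) dθ < ∞. -/
open Complex ComplexConjugate Metric Set

/-! Since `G = f(𝔻)` is bounded, the Pommerenke condition bounds the length of the image of each
half of the circle `|z| = r` by `M_γ · diam G`: the endpoints are joined inside `f(|z| < r)` by the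
image of a path dipping into the disc, and that image has diameter at most `diam G`.
Quasiconformality gives `r (|h'| + |g'|) ≤ K |∂_θ f|` on `|z| = r`, hence
`∫ ‖D_f‖ dθ ≤ 2 K M_γ diam G / r`, which is bounded for `r > 1/2`; for `r ≤ 1/2` the integrand is
bounded on the compact disc `|z| ≤ 1/2`. -/

/-- The paper's `d_U(x, y)`: only the interior of the path has to lie in `U`.
If there is no such path the set is empty and the value is the junk `sInf ∅ = 0`. -/
noncomputable def internalDiamDist {X : Type*} [PseudoMetricSpace X] (U : Set X) (x y : X) : ℝ :=
  sInf {d : ℝ | ∃ Γ : ℝ → X, ContinuousOn Γ (Icc 0 1) ∧ Γ 0 = x ∧ Γ 1 = y ∧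
    (∀ t ∈ Ioo (0:ℝ) 1, Γ t ∈ U) ∧ d = diam (Γ '' Icc 0 1)}

section internalDiamDist

variable {X : Type*} [PseudoMetricSpace X]

theorem internalDiamDist_nonneg (U : Set X) (x y : X) : 0 ≤ internalDiamDist U x y := by
  apply Real.sInf_nonneg
  rintro d ⟨Γ, -, -, -, -, rfl⟩
  exact diam_nonneg

theorem internalDiamDist_le_diam {U V : Set X} {x y : X} {Γ : ℝ → X}
    (hΓ : ContinuousOn Γ (Icc 0 1)) (hΓ0 : Γ 0 = x) (hΓ1 : Γ 1 = y)
    (hΓU : ∀ t ∈ Ioo (0:ℝ) 1, Γ t ∈ U) (hΓV : Γ '' Icc 0 1 ⊆ V) (hV : Bornology.IsBounded V) :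
    internalDiamDist U x y ≤ diam V := by
  refine le_trans (csInf_le ⟨0, ?_⟩ ⟨Γ, hΓ, hΓ0, hΓ1, hΓU, rfl⟩) (diam_mono hΓV hV)
  rintro d ⟨Γ', -, -, -, -, rfl⟩
  exact diam_nonneg

end internalDiamDist

theorem norm_ofReal_mul_exp_mul_I (r θ : ℝ) : ‖(r:ℂ) * exp (θ * I)‖ = |r| := by
  simpa only [circleMap_zero] using norm_circleMap_zero r θ

theorem ContinuousOn.comp_ofReal_mul_exp_mul_I {E : Type*} [TopologicalSpace E] {φ : ℂ → E}
    (hφ : ContinuousOn φ (ball 0 1)) {r : ℝ} (hr : |r| < 1) :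
    Continuous fun θ : ℝ => φ (r * exp (θ * I)) :=
  hφ.comp_continuous (by fun_prop) fun θ => by
    rwa [mem_ball_zero_iff, norm_ofReal_mul_exp_mul_I]

theorem exists_path_ofReal_mul_exp_mul_I {r : ℝ} (hr : 0 < r) (θ₁ θ₂ : ℝ) :
    ∃ w : ℝ → ℂ, Continuous w ∧ w 0 = r * exp (θ₁ * I) ∧ w 1 = r * exp (θ₂ * I) ∧
      (∀ t ∈ Ioo (0:ℝ) 1, w t ∈ ball 0 r) ∧ ∀ t ∈ Icc (0:ℝ) 1, w t ∈ closedBall 0 r := by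
  refine ⟨fun t => ((r * (1 - t * (1 - t)) : ℝ) : ℂ) * exp (((θ₁ + t * (θ₂ - θ₁) : ℝ) : ℂ) * I),
    by fun_prop, by simp, by simp, ?_, ?_⟩
  · rintro t ⟨ht0, ht1⟩
    rw [mem_ball_zero_iff, norm_ofReal_mul_exp_mul_I, abs_lt]
    constructor <;> nlinarith [mul_pos hr (mul_pos ht0 (sub_pos.2 ht1)),
      mul_nonneg hr.le (sq_nonneg (t - 1 / 2))]
  · rintro t ⟨ht0, ht1⟩
    rw [mem_closedBall_zero_iff, norm_ofReal_mul_exp_mul_I, abs_le]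
    constructor <;> nlinarith [mul_nonneg hr.le (mul_nonneg ht0 (sub_nonneg.2 ht1)),
      mul_nonneg hr.le (sq_nonneg (t - 1 / 2))]

theorem internalDiamDist_image_ball_le_diam {X : Type*} [PseudoMetricSpace X] {f : ℂ → X}
    (hf : ContinuousOn f (ball 0 1)) (hbdd : Bornology.IsBounded (f '' ball 0 1))
    {r : ℝ} (hr : r ∈ Ioo (0:ℝ) 1) (θ₁ θ₂ : ℝ) :
    internalDiamDist (f '' ball 0 r) (f (r * exp (θ₁ * I))) (f (r * exp (θ₂ * I)))
      ≤ diam (f '' ball 0 1) := by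
  obtain ⟨w, hw, hw0, hw1, hw_ball, hw_closedBall⟩ := exists_path_ofReal_mul_exp_mul_I hr.1 θ₁ θ₂
  have hw_disc : MapsTo w (Icc 0 1) (ball 0 1) := fun t ht =>
    closedBall_subset_ball hr.2 (hw_closedBall t ht)
  refine internalDiamDist_le_diam (Γ := f ∘ w) (hf.comp hw.continuousOn hw_disc)
    (by rw [Function.comp_apply, hw0]) (by rw [Function.comp_apply, hw1])
    (fun t ht => mem_image_of_mem f (hw_ball t ht)) ?_ hbdd
  rw [image_comp]
  exact image_mono hw_disc.image_subset

theorem norm_mul_add_norm_le_of_quasiconformal {K : ℝ} (hK : 0 ≤ K) {a b : ℂ}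
    (hab : ‖a‖ + ‖b‖ ≤ K * (‖a‖ - ‖b‖)) (w : ℂ) :
    ‖w‖ * (‖a‖ + ‖b‖) ≤ K * ‖w * a + conj (w * b)‖ := by
  have hlower : ‖w‖ * (‖a‖ - ‖b‖) ≤ ‖w * a + conj (w * b)‖ := by
    calc ‖w‖ * (‖a‖ - ‖b‖) = ‖w * a‖ - ‖-conj (w * b)‖ := by
          rw [norm_neg, norm_conj, norm_mul, norm_mul, mul_sub]
      _ ≤ ‖w * a + conj (w * b)‖ := by
          simpa only [sub_neg_eq_add] using norm_sub_norm_le (w * a) (-conj (w * b))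
  calc ‖w‖ * (‖a‖ + ‖b‖) ≤ ‖w‖ * (K * (‖a‖ - ‖b‖)) :=
        mul_le_mul_of_nonneg_left hab (norm_nonneg w)
    _ = K * (‖w‖ * (‖a‖ - ‖b‖)) := by ring
    _ ≤ K * ‖w * a + conj (w * b)‖ := mul_le_mul_of_nonneg_left hlower hK

section quasiconformal

variable {K r : ℝ} {φ ψ : ℂ → ℂ}

theorem integral_norm_add_norm_le_of_quasiconformal (hK : 0 ≤ K) (hr : r ∈ Ioo (0:ℝ) 1)
    (hφ : ContinuousOn φ (ball 0 1)) (hψ : ContinuousOn ψ (ball 0 1))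
    (hqc : ∀ z ∈ ball (0:ℂ) 1, ‖φ z‖ + ‖ψ z‖ ≤ K * (‖φ z‖ - ‖ψ z‖)) {a b : ℝ} (hab : a ≤ b) :
    ∫ θ in a..b, (‖φ (r * exp (θ * I))‖ + ‖ψ (r * exp (θ * I))‖)
      ≤ K / r * ∫ θ in a..b, ‖I * r * exp (θ * I) * φ (r * exp (θ * I))
          + conj (I * r * exp (θ * I) * ψ (r * exp (θ * I)))‖ := by
  have hr_abs : |r| < 1 := by rw [abs_of_pos hr.1]; exact hr.2
  have hφc := hφ.comp_ofReal_mul_exp_mul_I hr_abs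
  have hψc := hψ.comp_ofReal_mul_exp_mul_I hr_abs
  have hw : Continuous fun θ : ℝ => I * r * exp (θ * I) := by fun_prop
  rw [← intervalIntegral.integral_const_mul]
  have htangent := ((hw.mul hφc).add (continuous_conj.comp (hw.mul hψc))).norm
  refine intervalIntegral.integral_mono_on hab ((hφc.norm.add hψc.norm).intervalIntegrable _ _)
    ((continuous_const.mul htangent).intervalIntegrable _ _) fun θ _ => ?_
  have hz : (r : ℂ) * exp (θ * I) ∈ ball 0 1 := by
    rwa [mem_ball_zero_iff, norm_ofReal_mul_exp_mul_I]
  have hw_norm : ‖I * r * exp (θ * I)‖ = r := by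
    rw [mul_assoc, norm_mul, norm_I, one_mul, norm_ofReal_mul_exp_mul_I, abs_of_pos hr.1]
  have hpointwise := norm_mul_add_norm_le_of_quasiconformal hK (hqc _ hz) (I * r * exp (θ * I))
  rw [hw_norm] at hpointwise
  rw [div_mul_eq_mul_div, le_div_iff₀ hr.1]
  linarith

theorem integral_norm_add_norm_le_of_arc_bound (hK : 0 ≤ K) (hr : r ∈ Ioo (0:ℝ) 1)
    (hφ : ContinuousOn φ (ball 0 1)) (hψ : ContinuousOn ψ (ball 0 1))
    (hqc : ∀ z ∈ ball (0:ℂ) 1, ‖φ z‖ + ‖ψ z‖ ≤ K * (‖φ z‖ - ‖ψ z‖)) {A : ℝ}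
    (harc : ∀ θ₁ θ₂ : ℝ, θ₁ < θ₂ → θ₂ - θ₁ ≤ Real.pi →
      ∫ θ in θ₁..θ₂, ‖I * r * exp (θ * I) * φ (r * exp (θ * I))
          + conj (I * r * exp (θ * I) * ψ (r * exp (θ * I)))‖ ≤ A) :
    ∫ θ in (0:ℝ)..2 * Real.pi, (‖φ (r * exp (θ * I))‖ + ‖ψ (r * exp (θ * I))‖)
      ≤ K / r * (2 * A) := by
  have hr_abs : |r| < 1 := by rw [abs_of_pos hr.1]; exact hr.2
  have hφc := hφ.comp_ofReal_mul_exp_mul_I hr_abs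
  have hψc := hψ.comp_ofReal_mul_exp_mul_I hr_abs
  have hcont : Continuous fun θ : ℝ => ‖φ (r * exp (θ * I))‖ + ‖ψ (r * exp (θ * I))‖ :=
    hφc.norm.add hψc.norm
  have hhalf : ∀ θ₁ θ₂ : ℝ, θ₁ < θ₂ → θ₂ - θ₁ ≤ Real.pi →
      ∫ θ in θ₁..θ₂, (‖φ (r * exp (θ * I))‖ + ‖ψ (r * exp (θ * I))‖) ≤ K / r * A :=
    fun θ₁ θ₂ h12 hπ => (integral_norm_add_norm_le_of_quasiconformal hK hr hφ hψ hqc h12.le).trans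
      (mul_le_mul_of_nonneg_left (harc θ₁ θ₂ h12 hπ) (div_nonneg hK hr.1.le))
  rw [← intervalIntegral.integral_add_adjacent_intervals (b := Real.pi)
    (hcont.intervalIntegrable _ _) (hcont.intervalIntegrable _ _)]
  linarith [hhalf 0 Real.pi Real.pi_pos (by linarith),
    hhalf Real.pi (2 * Real.pi) (by linarith [Real.pi_pos]) (by linarith)]

end quasiconformal

theorem exists_integral_le_of_continuousOn {F : ℂ → ℝ} (hF : ContinuousOn F (ball 0 1))
    {ρ : ℝ} (hρ : ρ < 1) :
    ∃ C, ∀ r : ℝ, |r| ≤ ρ → ∫ θ in (0:ℝ)..2 * Real.pi, F (r * exp (θ * I)) ≤ C := by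
  obtain ⟨M, hM⟩ := (isCompact_closedBall (0:ℂ) ρ).exists_bound_of_continuousOn
    (hF.mono (closedBall_subset_ball hρ))
  refine ⟨M * |2 * Real.pi - 0|, fun r hr => (Real.le_norm_self _).trans
    (intervalIntegral.norm_integral_le_of_norm_le_const fun θ _ => hM _ ?_)⟩
  rwa [mem_closedBall_zero_iff, norm_ofReal_mul_exp_mul_I]

theorem stmt_9_general (K : ℝ) (hK : 1 ≤ K) (h g f : ℂ → ℂ)
    (hh : AnalyticOnNhd ℂ h (Metric.ball (0:ℂ) 1)) (hg : AnalyticOnNhd ℂ g (Metric.ball (0:ℂ) 1))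
    (hf : ∀ z, f z = h z + (starRingEnd ℂ) (g z))
    (hqc : ∀ z ∈ Metric.ball (0:ℂ) 1,
      ‖deriv h z‖ + ‖deriv g z‖
        ≤ K * (‖deriv h z‖ - ‖deriv g z‖))
    (hbdd : Bornology.IsBounded (f '' Metric.ball (0:ℂ) 1))
    (hPomm : ∃ Mγ : ℝ, ∀ r ∈ Set.Ioo (0:ℝ) 1, ∀ θ₁ θ₂ : ℝ, θ₁ < θ₂ → θ₂ - θ₁ ≤ Real.pi →
      (∫ θ in θ₁..θ₂, ‖Complex.I * (r:ℂ) * Complex.exp ((θ:ℂ) * Complex.I) * deriv h ((r:ℂ) * Complex.exp ((θ:ℂ) * Complex.I))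
          + (starRingEnd ℂ) (Complex.I * (r:ℂ) * Complex.exp ((θ:ℂ) * Complex.I) * deriv g ((r:ℂ) * Complex.exp ((θ:ℂ) * Complex.I)))‖)
        ≤ Mγ * sInf {d : ℝ | ∃ Γ : ℝ → ℂ, ContinuousOn Γ (Set.Icc 0 1) ∧
            Γ 0 = f ((r:ℂ) * Complex.exp ((θ₁:ℂ) * Complex.I)) ∧ Γ 1 = f ((r:ℂ) * Complex.exp ((θ₂:ℂ) * Complex.I)) ∧
            (∀ t ∈ Set.Ioo (0:ℝ) 1, Γ t ∈ f '' Metric.ball (0:ℂ) r) ∧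
            d = Metric.diam (Γ '' Set.Icc 0 1)}) :
    ∃ C : ℝ, ∀ r ∈ Set.Ioo (0:ℝ) 1,
      (∫ θ in (0:ℝ)..(2*Real.pi), (‖deriv h ((r:ℂ) * Complex.exp ((θ:ℂ) * Complex.I))‖ + ‖deriv g ((r:ℂ) * Complex.exp ((θ:ℂ) * Complex.I))‖)) ≤ C := by
  obtain ⟨Mγ, hM⟩ := hPomm
  have hh' : ContinuousOn (deriv h) (ball 0 1) := hh.deriv.continuousOn
  have hg' : ContinuousOn (deriv g) (ball 0 1) := hg.deriv.continuousOn
  have hfc : ContinuousOn f (ball 0 1) :=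
    (hh.continuousOn.add (continuous_conj.comp_continuousOn hg.continuousOn)).congr fun z _ => hf z
  obtain ⟨C, hC⟩ := exists_integral_le_of_continuousOn (hh'.norm.add hg'.norm)
    (show (1 / 2 : ℝ) < 1 by norm_num)
  set D := diam (f '' ball 0 1)
  refine ⟨max C (4 * K * (|Mγ| * D)), fun r hr => ?_⟩
  rcases le_or_gt r (1 / 2) with hr_small | hr_large
  · exact (hC r (by rwa [abs_of_pos hr.1])).trans (le_max_left _ _)
  have hK0 : 0 ≤ K := zero_le_one.trans hK
  calc _ ≤ K / r * (2 * (|Mγ| * D)) :=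
        integral_norm_add_norm_le_of_arc_bound hK0 hr hh' hg' hqc fun θ₁ θ₂ h12 hπ =>
          (hM r hr θ₁ θ₂ h12 hπ).trans (mul_le_mul (le_abs_self Mγ)
            (internalDiamDist_image_ball_le_diam hfc hbdd hr θ₁ θ₂)
            (internalDiamDist_nonneg _ _ _) (abs_nonneg Mγ))
    _ ≤ 4 * K * (|Mγ| * D) := by
        have hKMD : 0 ≤ K * (|Mγ| * D) := mul_nonneg hK0 (mul_nonneg (abs_nonneg Mγ) diam_nonneg)
        rw [div_mul_eq_mul_div, div_le_iff₀ hr.1]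
        nlinarith
    _ ≤ max C (4 * K * (|Mγ| * D)) := le_max_right _ _

theorem stmt_9 (K : ℝ) (hK : 1 ≤ K) (h g f : ℂ → ℂ)
    (hh : AnalyticOnNhd ℂ h (Metric.ball (0:ℂ) 1)) (hg : AnalyticOnNhd ℂ g (Metric.ball (0:ℂ) 1))
    (hf : ∀ z, f z = h z + (starRingEnd ℂ) (g z))
    (finj : Set.InjOn f (Metric.ball (0:ℂ) 1))
    (fsp : ∀ z ∈ Metric.ball (0:ℂ) 1, ‖deriv g z‖ < ‖deriv h z‖)
    (h0 : h 0 = 0) (g0 : g 0 = 0) (h'1 : deriv h 0 = 1) (g'0 : deriv g 0 = 0)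
    (hqc : ∀ z ∈ Metric.ball (0:ℂ) 1,
      ‖deriv h z‖ + ‖deriv g z‖
        ≤ K * (‖deriv h z‖ - ‖deriv g z‖))
    (hbdd : Bornology.IsBounded (f '' Metric.ball (0:ℂ) 1))
    (hPomm : ∃ Mγ : ℝ, ∀ r ∈ Set.Ioo (0:ℝ) 1, ∀ θ₁ θ₂ : ℝ, θ₁ < θ₂ → θ₂ - θ₁ ≤ Real.pi →
      (∫ θ in θ₁..θ₂, ‖Complex.I * (r:ℂ) * Complex.exp ((θ:ℂ) * Complex.I) * deriv h ((r:ℂ) * Complex.exp ((θ:ℂ) * Complex.I))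
          + (starRingEnd ℂ) (Complex.I * (r:ℂ) * Complex.exp ((θ:ℂ) * Complex.I) * deriv g ((r:ℂ) * Complex.exp ((θ:ℂ) * Complex.I)))‖)
        ≤ Mγ * sInf {d : ℝ | ∃ Γ : ℝ → ℂ, ContinuousOn Γ (Set.Icc 0 1) ∧
            Γ 0 = f ((r:ℂ) * Complex.exp ((θ₁:ℂ) * Complex.I)) ∧ Γ 1 = f ((r:ℂ) * Complex.exp ((θ₂:ℂ) * Complex.I)) ∧
            (∀ t ∈ Set.Ioo (0:ℝ) 1, Γ t ∈ f '' Metric.ball (0:ℂ) r) ∧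
            d = Metric.diam (Γ '' Set.Icc 0 1)})
    (hJohn : ∃ c : ℝ, 1 ≤ c ∧ (∀ ζ : ℂ, ‖ζ‖ = 1 → ∀ r ρ : ℝ, 0 ≤ r → r ≤ ρ → ρ < 1 →
      (∫ t in r..ρ, ‖ζ * deriv h ((t:ℂ)*ζ) + (starRingEnd ℂ) (ζ * deriv g ((t:ℂ)*ζ))‖)
        ≤ c * Metric.infDist (f ((r:ℂ)*ζ)) ((f '' Metric.ball (0:ℂ) 1)ᶜ))) :
    ∃ C : ℝ, ∀ r ∈ Set.Ioo (0:ℝ) 1,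
      (∫ θ in (0:ℝ)..(2*Real.pi), (‖deriv h ((r:ℂ) * Complex.exp ((θ:ℂ) * Complex.I))‖ + ‖deriv g ((r:ℂ) * Complex.exp ((θ:ℂ) * Complex.I))‖)) ≤ C :=
  stmt_9_general K hK h g f hh hg hf hqc hbdd hPomm
end

section
/- Let K ≥ 1 and let f = h + conj∘g be an injective, sense-preserving, K-quasiconformal harmonic mapping on 𝔻 with Ω = f(𝔻) ≠ ℂ. Then for every z ∈ 𝔻, |h'(z)| + |g'(z)| ≥ ((1+K)/(2K))·d_Ω(f(z))/(1−|z|²). -/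
/-!
Let `F = f⁻¹ : Ω → 𝔻` and `k = (K - 1) / (K + 1)`, so that `|g'| ≤ k |h'|`. If `F w = ζ` and
`v = h'(ζ) u + conj (g'(ζ) u)`, then the derivative of `h ∘ F` at `w` sends `v` to `h'(ζ) u`, and
`|v|² ≤ (1 + k) Re (conj v · h'(ζ) u)`. Integrating along segments, `h ∘ F` is co-Lipschitz with
constant `1 + k` on the disc `B(f z, d)`, `d = d_Ω(f z)`. An open co-Lipschitz map covers a disc
of radius `d / (1 + k)` about `h z`, so there `h` has a continuous, hence holomorphic, inverse
branch with values in `𝔻` sending `h z` to `z`. The Schwarz–Pick lemma for this branch gives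
`d / (1 + k) ≤ (1 - |z|²) |h'(z)|`, and `1 / (1 + k) = (1 + K) / (2K)`.
-/

open Complex Metric Set Filter Topology Function ComplexConjugate
open scoped InnerProductSpace

theorem norm_add_sq_le_mul_inner_of_norm_le_mul {F : Type*} [NormedAddCommGroup F]
    [InnerProductSpace ℝ F] {x y : F} {k : ℝ} (hk : k ≤ 1) (hy : ‖y‖ ≤ k * ‖x‖) :
    ‖x + y‖ ^ 2 ≤ (1 + k) * ⟪x + y, x⟫_ℝ := by
  have hxy := abs_real_inner_le_norm x y
  rw [abs_le] at hxy
  rw [norm_add_sq_real, inner_add_left, real_inner_self_eq_norm_sq, real_inner_comm x y]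
  nlinarith [mul_nonneg (sub_nonneg.2 hk) (sub_nonneg.2 hxy.2),
    mul_nonneg (add_nonneg (norm_nonneg x) (norm_nonneg y)) (sub_nonneg.2 hy)]

theorem dist_le_mul_dist_of_le_inner_fderiv {E : Type*} [NormedAddCommGroup E]
    [InnerProductSpace ℝ E] {φ : E → E} {φ' : E → E →L[ℝ] E} {s : Set E} {C : ℝ}
    (hs : Convex ℝ s) (hC : 0 ≤ C) (hφ : ∀ x ∈ s, HasFDerivAt φ (φ' x) x)
    (hφ' : ∀ x ∈ s, ∀ v, ‖v‖ ^ 2 ≤ C * ⟪v, φ' x v⟫_ℝ) {x y : E} (hx : x ∈ s) (hy : y ∈ s) :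
    dist x y ≤ C * dist (φ x) (φ y) := by
  set v := y - x
  have hseg : ∀ t ∈ Icc (0 : ℝ) 1, x + t • v ∈ s := fun t ht => by
    simpa [v, AffineMap.lineMap_apply_module', add_comm] using hs.lineMap_mem hx hy ht
  have hderiv : ∀ t ∈ Icc (0 : ℝ) 1, HasDerivAt (fun t : ℝ => C * ⟪v, φ (x + t • v)⟫_ℝ)
      (C * ⟪v, φ' (x + t • v) v⟫_ℝ) t := by
    intro t ht
    have hline : HasDerivAt (fun t : ℝ => x + t • v) v t := by
      simpa using ((hasDerivAt_id t).smul_const v).const_add x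
    exact ((innerSL ℝ v).hasFDerivAt.comp_hasDerivAt t
      ((hφ _ (hseg t ht)).comp_hasDerivAt t hline)).const_mul C
  have hmvt := (convex_Icc (0 : ℝ) 1).mul_sub_le_image_sub_of_le_deriv
    (fun t ht => (hderiv t ht).continuousAt.continuousWithinAt)
    (fun t ht => (hderiv t (interior_subset ht)).differentiableAt.differentiableWithinAt)
    (fun t ht => (hderiv t (interior_subset ht)).deriv ▸ hφ' _ (hseg t (interior_subset ht)) v)
    0 (left_mem_Icc.2 zero_le_one) 1 (right_mem_Icc.2 zero_le_one) zero_le_one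
  have hvφ : ‖v‖ ^ 2 ≤ C * (‖v‖ * ‖φ y - φ x‖) := by
    simp only [zero_smul, add_zero, one_smul, v, add_sub_cancel, sub_zero, mul_one] at hmvt
    rw [← mul_sub, ← inner_sub_right] at hmvt
    exact hmvt.trans (mul_le_mul_of_nonneg_left (real_inner_le_norm _ _) hC)
  rw [dist_comm, dist_eq_norm, dist_comm, dist_eq_norm]
  rcases (norm_nonneg v).eq_or_lt with hv | hv
  · rw [← hv]; positivity
  · nlinarith

section Covering

variable {X Y : Type*} [MetricSpace X] [ProperSpace X] [NormedAddCommGroup Y] [NormedSpace ℝ Y]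

theorem ball_subset_image_ball_of_dist_le_mul_dist {φ : X → Y} {c : X} {r C : ℝ}
    (hr : 0 < r) (hC : 0 < C) (hφ : ContinuousOn φ (ball c r)) (hopen : IsOpen (φ '' ball c r))
    (hco : ∀ x ∈ ball c r, dist x c ≤ C * dist (φ x) (φ c)) :
    ball (φ c) (r / C) ⊆ φ '' ball c r := by
  refine (convex_ball _ _).isPreconnected.subset_of_closure_inter_subset hopen
    ⟨φ c, mem_ball_self (div_pos hr hC), mem_image_of_mem _ (mem_ball_self hr)⟩ ?_
  rintro y ⟨hy, hyr⟩
  obtain ⟨ρ, hyρ, hρ⟩ := exists_between (mem_ball.1 hyr)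
  have hK : closedBall c (C * ρ) ⊆ ball c r :=
    closedBall_subset_ball (by rwa [lt_div_iff₀ hC, mul_comm] at hρ)
  have hsub : ball (φ c) ρ ∩ φ '' ball c r ⊆ φ '' closedBall c (C * ρ) := by
    rintro _ ⟨hxρ, x, hx, rfl⟩
    exact mem_image_of_mem _ (mem_closedBall.2 <|
      (hco x hx).trans (mul_le_mul_of_nonneg_left (mem_ball.1 hxρ).le hC.le))
  have hclosed : IsClosed (φ '' closedBall c (C * ρ)) :=
    ((isCompact_closedBall c _).image_of_continuousOn (hφ.mono hK)).isClosed
  exact image_mono hK <| hclosed.closure_subset <|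
    closure_mono hsub (isOpen_ball.inter_closure ⟨mem_ball.2 hyρ, hy⟩)

theorem exists_continuousOn_rightInvOn_ball {φ : X → Y} {c : X} {r C : ℝ}
    (hr : 0 < r) (hC : 0 < C) (hφ : ContinuousOn φ (ball c r)) (hopen : IsOpen (φ '' ball c r))
    (hco : ∀ x ∈ ball c r, ∀ y ∈ ball c r, dist x y ≤ C * dist (φ x) (φ y)) :
    ∃ ψ : Y → X, ContinuousOn ψ (ball (φ c) (r / C)) ∧ MapsTo ψ (ball (φ c) (r / C)) (ball c r) ∧
      RightInvOn ψ φ (ball (φ c) (r / C)) ∧ ψ (φ c) = c := by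
  have hcover := ball_subset_image_ball_of_dist_le_mul_dist hr hC hφ hopen
    fun x hx => hco x hx c (mem_ball_self hr)
  have hinj : InjOn φ (ball c r) := fun x hx y hy hxy => by
    simpa [hxy] using hco x hx y hy
  have : Nonempty X := ⟨c⟩
  refine ⟨invFunOn φ (ball c r), ?_, fun y hy => invFunOn_mem (hcover hy),
    fun y hy => invFunOn_eq (hcover hy), hinj.leftInvOn_invFunOn (mem_ball_self hr)⟩
  have hlip : LipschitzOnWith (Real.toNNReal C) (invFunOn φ (ball c r)) (φ '' ball c r) := by
    refine LipschitzOnWith.of_dist_le_mul fun y hy y' hy' => ?_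
    rw [Real.coe_toNNReal _ hC.le]
    simpa only [invFunOn_eq hy, invFunOn_eq hy'] using
      hco _ (invFunOn_mem hy) _ (invFunOn_mem hy')
  exact hlip.continuousOn.mono hcover

end Covering

theorem IsOpen.image_of_hasStrictDerivAt {𝕜 : Type*} [NontriviallyNormedField 𝕜]
    [CompleteSpace 𝕜] {f f' : 𝕜 → 𝕜} {s : Set 𝕜} (hs : IsOpen s)
    (hf : ∀ x ∈ s, HasStrictDerivAt f (f' x) x) (hf' : ∀ x ∈ s, f' x ≠ 0) : IsOpen (f '' s) := by
  rw [isOpen_iff_mem_nhds]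
  rintro _ ⟨x, hx, rfl⟩
  rw [← (hf x hx).map_nhds_eq (hf' x hx)]
  exact image_mem_map (hs.mem_nhds hx)

theorem hasStrictFDerivAt_invFunOn_of_injOn {𝕜 E F : Type*} [NontriviallyNormedField 𝕜]
    [NormedAddCommGroup E] [NormedSpace 𝕜 E] [CompleteSpace E] [NormedAddCommGroup F]
    [NormedSpace 𝕜 F] {f : E → F} {f' : E → E →L[𝕜] F} {U : Set E} (hU : IsOpen U)
    (hf : InjOn f U) (hf' : ∀ z ∈ U, HasStrictFDerivAt f (f' z) z)
    (hinv : ∀ z ∈ U, (f' z).IsInvertible) {w : F} (hw : w ∈ f '' U) :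
    HasStrictFDerivAt (invFunOn f U) (f' (invFunOn f U w)).inverse w := by
  obtain ⟨z, hz, rfl⟩ := hw
  obtain ⟨L, hL⟩ := hinv z hz
  rw [hf.leftInvOn_invFunOn hz, ← hL, ContinuousLinearMap.inverse_equiv]
  exact (hL ▸ hf' z hz).to_local_left_inverse
    (eventually_of_mem (hU.mem_nhds hz) hf.leftInvOn_invFunOn)

namespace Complex

noncomputable def diskMobius (a z : ℂ) : ℂ := (z - a) / (1 - conj a * z)

theorem one_sub_conj_mul_ne_zero {a z : ℂ} (ha : ‖a‖ < 1) (hz : ‖z‖ < 1) :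
    1 - conj a * z ≠ 0 := by
  rw [sub_ne_zero]
  intro h
  have : ‖conj a * z‖ < 1 := by
    rw [norm_mul, norm_conj]
    nlinarith [norm_nonneg a, norm_nonneg z]
  simp [← h] at this

theorem normSq_one_sub_conj_mul_sub_normSq_sub (a z : ℂ) :
    normSq (1 - conj a * z) - normSq (z - a) = (1 - normSq a) * (1 - normSq z) := by
  simp only [normSq_apply, sub_re, sub_im, mul_re, mul_im, conj_re, conj_im, one_re, one_im]
  ring

theorem norm_diskMobius_lt_one {a z : ℂ} (ha : ‖a‖ < 1) (hz : ‖z‖ < 1) :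
    ‖diskMobius a z‖ < 1 := by
  rw [diskMobius, norm_div, div_lt_one (norm_pos_iff.2 (one_sub_conj_mul_ne_zero ha hz)),
    ← sq_lt_sq₀ (norm_nonneg _) (norm_nonneg _), ← normSq_eq_norm_sq, ← normSq_eq_norm_sq,
    ← sub_pos, normSq_one_sub_conj_mul_sub_normSq_sub, normSq_eq_norm_sq, normSq_eq_norm_sq]
  have ha2 : ‖a‖ ^ 2 < 1 := by nlinarith [norm_nonneg a]
  have hz2 : ‖z‖ ^ 2 < 1 := by nlinarith [norm_nonneg z]
  exact mul_pos (sub_pos.2 ha2) (sub_pos.2 hz2)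

@[simp] theorem diskMobius_self (a : ℂ) : diskMobius a a = 0 := by simp [diskMobius]

theorem hasDerivAt_diskMobius_self {a : ℂ} (ha : ‖a‖ < 1) :
    HasDerivAt (diskMobius a) (((1 - ‖a‖ ^ 2 : ℝ) : ℂ))⁻¹ a := by
  have hden := one_sub_conj_mul_ne_zero ha ha
  have hconj : conj a * a = ((‖a‖ ^ 2 : ℝ) : ℂ) := by rw [conj_mul']; push_cast; ring
  have h := ((hasDerivAt_id' a).sub_const a).div
    (((hasDerivAt_id' a).const_mul (conj a)).const_sub 1) hden
  refine h.congr_deriv ?_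
  rw [hconj] at hden ⊢
  push_cast at hden ⊢
  field_simp
  ring

theorem norm_deriv_le_div_of_mapsTo_unitBall {Θ : ℂ → ℂ} {c : ℂ} {ρ : ℝ}
    (hd : DifferentiableOn ℂ Θ (ball c ρ)) (hmaps : MapsTo Θ (ball c ρ) (ball 0 1)) (hρ : 0 < ρ) :
    ‖deriv Θ c‖ ≤ (1 - ‖Θ c‖ ^ 2) / ρ := by
  have hΘc : ‖Θ c‖ < 1 := mem_ball_zero_iff.1 (hmaps (mem_ball_self hρ))
  have hpos : 0 < 1 - ‖Θ c‖ ^ 2 := by nlinarith [norm_nonneg (Θ c)]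
  have hmob : ∀ z ∈ ball c ρ, DifferentiableAt ℂ (diskMobius (Θ c)) (Θ z) := fun z hz =>
    (differentiableAt_id.sub_const _).div ((differentiableAt_id.const_mul _).const_sub _)
      (one_sub_conj_mul_ne_zero hΘc (mem_ball_zero_iff.1 (hmaps hz)))
  have hschwarz := norm_deriv_le_div_of_mapsTo_ball (f := diskMobius (Θ c) ∘ Θ)
    (fun z hz =>
      ((hmob z hz).comp z (hd.differentiableAt (isOpen_ball.mem_nhds hz))).differentiableWithinAt)
    (fun z hz => by
      simpa using (norm_diskMobius_lt_one hΘc (mem_ball_zero_iff.1 (hmaps hz))).le)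
    hρ
  rw [((hasDerivAt_diskMobius_self hΘc).comp c
    (hd.differentiableAt (isOpen_ball.mem_nhds (mem_ball_self hρ))).hasDerivAt).deriv,
    norm_mul, norm_inv, norm_real, Real.norm_of_nonneg hpos.le, inv_mul_le_iff₀ hpos] at hschwarz
  rwa [mul_one_div] at hschwarz

noncomputable def mulAddConjMul (a b : ℂ) : ℂ →L[ℝ] ℂ :=
  ContinuousLinearMap.mul ℝ ℂ a + conjCLE.toContinuousLinearMap ∘L ContinuousLinearMap.mul ℝ ℂ b

@[simp] theorem mulAddConjMul_apply (a b v : ℂ) : mulAddConjMul a b v = a * v + conj (b * v) :=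
  rfl

theorem isInvertible_mulAddConjMul {a b : ℂ} (hab : ‖b‖ < ‖a‖) :
    (mulAddConjMul a b).IsInvertible := by
  have hinj : Injective (mulAddConjMul a b) := by
    refine (injective_iff_map_eq_zero _).2 fun v hv => ?_
    rw [mulAddConjMul_apply, add_eq_zero_iff_eq_neg] at hv
    have hnorm := congrArg norm hv
    rw [norm_neg, norm_conj, norm_mul, norm_mul] at hnorm
    by_contra hv0
    exact hab.ne' (mul_right_cancel₀ (norm_ne_zero_iff.2 hv0) hnorm)
  exact ⟨(LinearEquiv.ofInjectiveEndo (mulAddConjMul a b).toLinearMap hinj).toContinuousLinearEquiv,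
    rfl⟩

theorem norm_sq_le_mul_inner_mul_inverse_mulAddConjMul {k : ℝ} (hk : k ≤ 1) {a b : ℂ}
    (hab : ‖b‖ < ‖a‖) (hkab : ‖b‖ ≤ k * ‖a‖) (v : ℂ) :
    ‖v‖ ^ 2 ≤ (1 + k) * ⟪v, a * (mulAddConjMul a b).inverse v⟫_ℝ := by
  set u := (mulAddConjMul a b).inverse v
  have hv : a * u + conj (b * u) = v := (isInvertible_mulAddConjMul hab).self_apply_inverse v
  rw [← hv]
  refine norm_add_sq_le_mul_inner_of_norm_le_mul hk ?_
  rw [norm_conj, norm_mul, norm_mul, ← mul_assoc]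
  exact mul_le_mul_of_nonneg_right hkab (norm_nonneg u)

end Complex

theorem HasStrictDerivAt.add_conj {h g : ℂ → ℂ} {a b z : ℂ} (hh : HasStrictDerivAt h a z)
    (hg : HasStrictDerivAt g b z) :
    HasStrictFDerivAt (fun w => h w + conj (g w)) (mulAddConjMul a b) z := by
  refine ((hh.hasStrictFDerivAt.restrictScalars ℝ).add
    (conjCLE.hasStrictFDerivAt.comp z (hg.hasStrictFDerivAt.restrictScalars ℝ))).congr_fderiv ?_
  ext v
  simp [mul_comm]

local notation "𝔻" => ball (0 : ℂ) 1

theorem le_one_sub_sq_mul_norm_deriv_of_rightInvOn {h Θ : ℂ → ℂ} {z₀ : ℂ} {ρ : ℝ} (hρ : 0 < ρ)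
    (hh : DifferentiableOn ℂ h 𝔻) (hh' : ∀ z ∈ 𝔻, deriv h z ≠ 0)
    (hΘ : ContinuousOn Θ (ball (h z₀) ρ)) (hmaps : MapsTo Θ (ball (h z₀) ρ) 𝔻)
    (hinv : RightInvOn Θ h (ball (h z₀) ρ)) (hΘ₀ : Θ (h z₀) = z₀) :
    ρ ≤ (1 - ‖z₀‖ ^ 2) * ‖deriv h z₀‖ := by
  have hderiv : ∀ y ∈ ball (h z₀) ρ, HasDerivAt Θ (deriv h (Θ y))⁻¹ y := fun y hy =>
    HasDerivAt.of_local_left_inverse (hΘ.continuousAt (isOpen_ball.mem_nhds hy))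
      (hh.differentiableAt (isOpen_ball.mem_nhds (hmaps hy))).hasDerivAt (hh' _ (hmaps hy))
      (eventually_of_mem (isOpen_ball.mem_nhds hy) hinv)
  have hpick := Complex.norm_deriv_le_div_of_mapsTo_unitBall
    (fun y hy => (hderiv y hy).differentiableAt.differentiableWithinAt) hmaps hρ
  have hz₀ : z₀ ∈ 𝔻 := hΘ₀ ▸ hmaps (mem_ball_self hρ)
  rw [(hderiv _ (mem_ball_self hρ)).deriv, hΘ₀, norm_inv,
    inv_le_iff_one_le_mul₀' (norm_pos_iff.2 (hh' z₀ hz₀))] at hpick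
  rwa [mul_div_assoc', one_le_div hρ, mul_comm] at hpick

structure IsUnivalentHarmonic (f h g : ℂ → ℂ) : Prop where
  eq_add_conj : ∀ z, f z = h z + conj (g z)
  analyticOnNhd_h : AnalyticOnNhd ℂ h 𝔻
  analyticOnNhd_g : AnalyticOnNhd ℂ g 𝔻
  injOn : InjOn f 𝔻
  norm_deriv_lt : ∀ z ∈ 𝔻, ‖deriv g z‖ < ‖deriv h z‖

namespace IsUnivalentHarmonic

variable {f h g : ℂ → ℂ} {k : ℝ}

theorem deriv_h_ne_zero (hf : IsUnivalentHarmonic f h g) {z : ℂ} (hz : z ∈ 𝔻) : deriv h z ≠ 0 :=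
  norm_pos_iff.1 ((norm_nonneg _).trans_lt (hf.norm_deriv_lt z hz))

theorem hasStrictFDerivAt (hf : IsUnivalentHarmonic f h g) {z : ℂ} (hz : z ∈ 𝔻) :
    HasStrictFDerivAt f (mulAddConjMul (deriv h z) (deriv g z)) z := by
  rw [funext hf.eq_add_conj]
  exact (hf.analyticOnNhd_h z hz).hasStrictDerivAt.add_conj
    (hf.analyticOnNhd_g z hz).hasStrictDerivAt

theorem continuousOn (hf : IsUnivalentHarmonic f h g) : ContinuousOn f 𝔻 := fun _ hz =>
  (hf.hasStrictFDerivAt hz).continuousAt.continuousWithinAt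

theorem hasFDerivAt_invFunOn (hf : IsUnivalentHarmonic f h g) {w : ℂ} (hw : w ∈ f '' 𝔻) :
    HasFDerivAt (invFunOn f 𝔻)
      (mulAddConjMul (deriv h (invFunOn f 𝔻 w)) (deriv g (invFunOn f 𝔻 w))).inverse w :=
  (hasStrictFDerivAt_invFunOn_of_injOn isOpen_ball hf.injOn (fun _ => hf.hasStrictFDerivAt)
    (fun z hz => isInvertible_mulAddConjMul (hf.norm_deriv_lt z hz)) hw).hasFDerivAt

theorem isOpen_image_comp_invFunOn (hf : IsUnivalentHarmonic f h g) {s : Set ℂ} (hs : IsOpen s)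
    (hsf : s ⊆ f '' 𝔻) : IsOpen ((h ∘ invFunOn f 𝔻) '' s) := by
  have hpre : invFunOn f 𝔻 '' s = 𝔻 ∩ f ⁻¹' s := by
    ext z
    refine ⟨?_, fun ⟨hz, hzs⟩ => ⟨f z, hzs, hf.injOn.leftInvOn_invFunOn hz⟩⟩
    rintro ⟨w, hw, rfl⟩
    exact ⟨invFunOn_mem (hsf hw), by rwa [mem_preimage, invFunOn_eq (hsf hw)]⟩
  rw [image_comp, hpre]
  exact (hf.continuousOn.isOpen_inter_preimage isOpen_ball hs).image_of_hasStrictDerivAt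
    (fun z hz => (hf.analyticOnNhd_h z hz.1).hasStrictDerivAt) fun z hz => hf.deriv_h_ne_zero hz.1

theorem nonneg_of_norm_deriv_le (hf : IsUnivalentHarmonic f h g)
    (hkd : ∀ z ∈ 𝔻, ‖deriv g z‖ ≤ k * ‖deriv h z‖) {z : ℂ} (hz : z ∈ 𝔻) : 0 ≤ k :=
  nonneg_of_mul_nonneg_left ((norm_nonneg _).trans (hkd z hz))
    (norm_pos_iff.2 (hf.deriv_h_ne_zero hz))

theorem dist_le_mul_dist_comp_invFunOn (hf : IsUnivalentHarmonic f h g) (hk : k ≤ 1)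
    (hkd : ∀ z ∈ 𝔻, ‖deriv g z‖ ≤ k * ‖deriv h z‖) {s : Set ℂ} (hs : Convex ℝ s)
    (hsf : s ⊆ f '' 𝔻) {w₁ w₂ : ℂ} (hw₁ : w₁ ∈ s) (hw₂ : w₂ ∈ s) :
    dist w₁ w₂ ≤ (1 + k) * dist (h (invFunOn f 𝔻 w₁)) (h (invFunOn f 𝔻 w₂)) := by
  set F := invFunOn f 𝔻
  have hF : ∀ w ∈ s, F w ∈ 𝔻 := fun w hw => invFunOn_mem (hsf hw)
  have hh : ∀ w ∈ s, HasDerivAt h (deriv h (F w)) (F w) := fun w hw =>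
    (hf.analyticOnNhd_h _ (hF w hw)).hasStrictDerivAt.hasDerivAt
  refine dist_le_mul_dist_of_le_inner_fderiv (φ := h ∘ F) hs ?_
    (fun w hw => ((hh w hw).hasFDerivAt.restrictScalars ℝ).comp w
      (hf.hasFDerivAt_invFunOn (hsf hw))) (fun w hw v => ?_) hw₁ hw₂
  · linarith [hf.nonneg_of_norm_deriv_le hkd (hF w₁ hw₁)]
  · simpa [mul_comm] using norm_sq_le_mul_inner_mul_inverse_mulAddConjMul hk
      (hf.norm_deriv_lt _ (hF w hw)) (hkd _ (hF w hw)) v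

theorem le_mul_one_sub_sq_mul_norm_deriv (hf : IsUnivalentHarmonic f h g) (hk : k ≤ 1)
    (hkd : ∀ z ∈ 𝔻, ‖deriv g z‖ ≤ k * ‖deriv h z‖) {z₀ : ℂ} (hz₀ : z₀ ∈ 𝔻) {d : ℝ} (hd : 0 < d)
    (hball : ball (f z₀) d ⊆ f '' 𝔻) :
    d ≤ (1 + k) * ((1 - ‖z₀‖ ^ 2) * ‖deriv h z₀‖) := by
  set F := invFunOn f 𝔻
  have hC : 0 < 1 + k := by linarith [hf.nonneg_of_norm_deriv_le hkd hz₀]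
  have hFz₀ : F (f z₀) = z₀ := hf.injOn.leftInvOn_invFunOn hz₀
  have hFcont : ∀ w ∈ ball (f z₀) d, ContinuousAt F w := fun w hw =>
    (hf.hasFDerivAt_invFunOn (hball hw)).continuousAt
  obtain ⟨ψ, hψc, hψmaps, hψinv, hψ₀⟩ := exists_continuousOn_rightInvOn_ball (φ := h ∘ F) hd hC
    (fun w hw => ((hf.analyticOnNhd_h _ (invFunOn_mem (hball hw))).continuousAt.comp
      (hFcont w hw)).continuousWithinAt)
    (hf.isOpen_image_comp_invFunOn isOpen_ball hball)
    (fun x hx y hy => hf.dist_le_mul_dist_comp_invFunOn hk hkd (convex_ball _ _) hball hx hy)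
  have hcenter : (h ∘ F) (f z₀) = h z₀ := by rw [comp_apply, hFz₀]
  rw [hcenter] at hψc hψmaps hψinv hψ₀
  have hρ := le_one_sub_sq_mul_norm_deriv_of_rightInvOn (Θ := F ∘ ψ) (div_pos hd hC)
    hf.analyticOnNhd_h.differentiableOn (fun z hz => hf.deriv_h_ne_zero hz)
    (fun y hy => ((hFcont _ (hψmaps hy)).comp_continuousWithinAt (hψc y hy)))
    (fun y hy => invFunOn_mem (hball (hψmaps hy))) hψinv (by rw [comp_apply, hψ₀, hFz₀])
  rwa [div_le_iff₀ hC, mul_comm] at hρ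

end IsUnivalentHarmonic

theorem stmt_14_general (K : ℝ) (hK : 1 ≤ K) (h g f : ℂ → ℂ)
    (hh : AnalyticOnNhd ℂ h (Metric.ball (0:ℂ) 1)) (hg : AnalyticOnNhd ℂ g (Metric.ball (0:ℂ) 1))
    (hf : ∀ z, f z = h z + (starRingEnd ℂ) (g z))
    (finj : Set.InjOn f (Metric.ball (0:ℂ) 1))
    (fsp : ∀ z ∈ Metric.ball (0:ℂ) 1, ‖deriv g z‖ < ‖deriv h z‖)
    (hqc : ∀ z ∈ Metric.ball (0:ℂ) 1,
      ‖deriv h z‖ + ‖deriv g z‖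
        ≤ K * (‖deriv h z‖ - ‖deriv g z‖)) :
    ∀ z ∈ Metric.ball (0:ℂ) 1,
      (‖deriv h (z)‖ + ‖deriv g (z)‖) ≥ ((1+K)/(2*K)) * Metric.infDist (f z) ((f '' Metric.ball (0:ℂ) 1)ᶜ) / (1 - ‖z‖ ^ 2) := by
  intro z hz
  have hr : 0 < 1 - ‖z‖ ^ 2 := by
    nlinarith [mem_ball_zero_iff.1 hz, norm_nonneg z]
  rw [ge_iff_le, div_le_iff₀ hr]
  rcases (infDist_nonneg (x := f z) (s := (f '' 𝔻)ᶜ)).eq_or_lt with hd | hd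
  · rw [← hd, mul_zero]
    positivity
  have hkd : ∀ z ∈ 𝔻, ‖deriv g z‖ ≤ (K - 1) / (K + 1) * ‖deriv h z‖ := fun z hz => by
    rw [div_mul_eq_mul_div, le_div_iff₀ (by linarith)]
    linarith [hqc z hz]
  have hbound := IsUnivalentHarmonic.le_mul_one_sub_sq_mul_norm_deriv ⟨hf, hh, hg, finj, fsp⟩
    (div_le_one_of_le₀ (by linarith) (by linarith)) hkd hz hd ball_infDist_compl_subset
  have hK' : (1 + K) / (2 * K) * (1 + (K - 1) / (K + 1)) = 1 := by
    field_simp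
    ring
  calc (1 + K) / (2 * K) * infDist (f z) (f '' 𝔻)ᶜ
      ≤ (1 + K) / (2 * K) * ((1 + (K - 1) / (K + 1)) * ((1 - ‖z‖ ^ 2) * ‖deriv h z‖)) :=
        mul_le_mul_of_nonneg_left hbound (by positivity)
    _ = (1 - ‖z‖ ^ 2) * ‖deriv h z‖ := by rw [← mul_assoc, hK', one_mul]
    _ ≤ (‖deriv h z‖ + ‖deriv g z‖) * (1 - ‖z‖ ^ 2) := by nlinarith [norm_nonneg (deriv g z)]

theorem stmt_14 (K : ℝ) (hK : 1 ≤ K) (h g f : ℂ → ℂ)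
    (hh : AnalyticOnNhd ℂ h (Metric.ball (0:ℂ) 1)) (hg : AnalyticOnNhd ℂ g (Metric.ball (0:ℂ) 1))
    (hf : ∀ z, f z = h z + (starRingEnd ℂ) (g z))
    (finj : Set.InjOn f (Metric.ball (0:ℂ) 1))
    (fsp : ∀ z ∈ Metric.ball (0:ℂ) 1, ‖deriv g z‖ < ‖deriv h z‖)
    (hqc : ∀ z ∈ Metric.ball (0:ℂ) 1,
      ‖deriv h z‖ + ‖deriv g z‖
        ≤ K * (‖deriv h z‖ - ‖deriv g z‖))
    (hne : f '' Metric.ball (0:ℂ) 1 ≠ Set.univ) :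
    ∀ z ∈ Metric.ball (0:ℂ) 1,
      (‖deriv h (z)‖ + ‖deriv g (z)‖) ≥ ((1+K)/(2*K)) * Metric.infDist (f z) ((f '' Metric.ball (0:ℂ) 1)ᶜ) / (1 - ‖z‖ ^ 2) :=
  stmt_14_general K hK h g f hh hg hf finj fsp hqc
end

section
/- Let h : ℂ → ℂ be analytic on 𝔻 with h'(z) ≠ 0 for all z ∈ 𝔻, let ζ ∈ ℂ with |ζ| = 1, let λ > 0 and r₁ ∈ [0,1), and suppose Re(ζ·h''(ηζ)/h'(ηζ)) < (2η − 2λ)/(1 − η²) for all η ∈ [r₁, 1). Then for all r, ρ with r₁ ≤ r ≤ ρ < 1, |h'(ρζ)| ≤ ((1+r)/(1+ρ))^{1+λ}·((1−ρ)/(1−r))^{λ−1}·|h'(rζ)|; in particular |h'(ρζ)| ≤ ((1−ρ)/(1−r))^{λ−1}·|h'(rζ)|. -/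
open Complex Metric Set

/-! Along the ray `η ↦ ηζ` the derivative of `log ‖h'(ηζ)‖` is `Re (ζ h''(ηζ) / h'(ηζ))`, and the
hypothesis says that it is below `-w'(η)` for `w = logWeight λ`. Hence `log ‖h'(ηζ)‖ + w(η)`
decreases on `[r₁, 1)`; exponentiating `w(r) - w(ρ)` gives the first bound, and the second follows
because `((1+r)/(1+ρ))^(1+λ) ≤ 1`. -/

theorem HasDerivAt.log_norm {f : ℝ → ℂ} {f' : ℂ} {x : ℝ} (hf : HasDerivAt f f' x)
    (hx : f x ≠ 0) : HasDerivAt (fun t => Real.log ‖f t‖) (f' / f x).re x := by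
  have hsq : HasDerivAt (fun t => Real.log (‖f t‖ ^ 2) / 2)
      (2 * (f' * starRingEnd ℂ (f x)).re / ‖f x‖ ^ 2 / 2) x := by
    simpa only [Complex.inner] using ((hf.norm_sq.log (by positivity)).div_const 2)
  convert hsq using 1
  · ext t
    rw [Real.log_pow]
    ring
  · rw [div_eq_mul_inv, inv_def, ← mul_assoc, re_mul_ofReal, normSq_eq_norm_sq]
    ring

theorem HasDerivAt.comp_ofReal_mul_const {F : ℂ → ℂ} {F' ζ : ℂ} {t : ℝ}
    (hF : HasDerivAt F F' (t * ζ)) : HasDerivAt (fun s : ℝ => F (s * ζ)) (F' * ζ) t := by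
  simpa using (hF.comp (t : ℂ) ((hasDerivAt_id (t : ℂ)).mul_const ζ)).comp_ofReal

noncomputable def logWeight (lam η : ℝ) : ℝ :=
  (1 + lam) * Real.log (1 + η) + (1 - lam) * Real.log (1 - η)

theorem hasDerivAt_logWeight (lam : ℝ) {η : ℝ} (hη : η ∈ Ioo (-1 : ℝ) 1) :
    HasDerivAt (logWeight lam) (-((2 * η - 2 * lam) / (1 - η ^ 2))) η := by
  have hp : 0 < 1 + η := by linarith [hη.1]
  have hm : 0 < 1 - η := by linarith [hη.2]
  have hlogp : HasDerivAt (fun t => Real.log (1 + t)) (1 / (1 + η)) η :=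
    ((hasDerivAt_id' η).const_add 1).log hp.ne'
  have hlogm : HasDerivAt (fun t => Real.log (1 - t)) (-1 / (1 - η)) η :=
    ((hasDerivAt_id' η).const_sub 1).log hm.ne'
  refine ((hlogp.const_mul (1 + lam)).add (hlogm.const_mul (1 - lam))).congr_deriv ?_
  rw [show (1 : ℝ) - η ^ 2 = (1 + η) * (1 - η) by ring]
  field_simp
  ring

theorem ofReal_mul_mem_ball_zero_one {ζ : ℂ} (hζ : ‖ζ‖ ≤ 1) {η : ℝ} (hη : η ∈ Ioo (-1) 1) :
    (η : ℂ) * ζ ∈ ball (0 : ℂ) 1 := by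
  rw [mem_ball_zero_iff, norm_mul, norm_real, Real.norm_eq_abs]
  calc |η| * ‖ζ‖ ≤ |η| := mul_le_of_le_one_right (abs_nonneg η) hζ
    _ < 1 := abs_lt.mpr hη

theorem antitoneOn_log_norm_add_logWeight {f : ℂ → ℂ} {ζ : ℂ} {lam r₁ : ℝ}
    (hf : DifferentiableOn ℂ f (ball 0 1)) (hf₀ : ∀ z ∈ ball (0 : ℂ) 1, f z ≠ 0)
    (hζ : ‖ζ‖ ≤ 1) (hr₁ : -1 < r₁)
    (hre : ∀ η : ℝ, r₁ < η → η < 1 →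
      (ζ * deriv f (η * ζ) / f (η * ζ)).re ≤ (2 * η - 2 * lam) / (1 - η ^ 2)) :
    AntitoneOn (fun η : ℝ => Real.log ‖f (η * ζ)‖ + logWeight lam η) (Ico r₁ 1) := by
  have hderiv : ∀ η ∈ Ioo (-1 : ℝ) 1,
      HasDerivAt (fun η : ℝ => Real.log ‖f (η * ζ)‖ + logWeight lam η)
        ((deriv f (η * ζ) * ζ / f (η * ζ)).re - (2 * η - 2 * lam) / (1 - η ^ 2)) η := by
    intro η hη
    have hz := ofReal_mul_mem_ball_zero_one hζ hη
    have hfz : HasDerivAt f (deriv f (η * ζ)) (η * ζ) :=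
      (hf.differentiableAt (isOpen_ball.mem_nhds hz)).hasDerivAt
    exact (hfz.comp_ofReal_mul_const.log_norm (hf₀ _ hz)).add (hasDerivAt_logWeight lam hη)
  have hIco : ∀ η ∈ Ico r₁ 1, η ∈ Ioo (-1 : ℝ) 1 := fun η hη => ⟨hr₁.trans_le hη.1, hη.2⟩
  refine antitoneOn_of_deriv_nonpos (convex_Ico r₁ 1)
    (fun η hη => (hderiv η (hIco η hη)).continuousAt.continuousWithinAt) ?_ ?_ <;>
    rw [interior_Ico]
  · exact fun η hη =>
      (hderiv η (hIco η (Ioo_subset_Ico_self hη))).differentiableAt.differentiableWithinAt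
  · intro η hη
    rw [(hderiv η (hIco η (Ioo_subset_Ico_self hη))).deriv, mul_comm _ ζ, sub_nonpos]
    exact hre η hη.1 hη.2

theorem le_mul_of_log_add_logWeight_le {a b lam r ρ : ℝ} (ha : 0 < a) (hb : 0 < b)
    (hr : r ∈ Ioo (-1 : ℝ) 1) (hρ : ρ ∈ Ioo (-1 : ℝ) 1)
    (h : Real.log a + logWeight lam ρ ≤ Real.log b + logWeight lam r) :
    a ≤ ((1 + r) / (1 + ρ)) ^ (1 + lam) * ((1 - ρ) / (1 - r)) ^ (lam - 1) * b := by
  have hr₁ : 0 < 1 + r := by linarith [hr.1]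
  have hr₂ : 0 < 1 - r := by linarith [hr.2]
  have hρ₁ : 0 < 1 + ρ := by linarith [hρ.1]
  have hρ₂ : 0 < 1 - ρ := by linarith [hρ.2]
  rw [← Real.log_le_log_iff ha (by positivity), Real.log_mul (by positivity) hb.ne',
    Real.log_mul (by positivity) (by positivity), Real.log_rpow (by positivity),
    Real.log_rpow (by positivity), Real.log_div hr₁.ne' hρ₁.ne', Real.log_div hρ₂.ne' hr₂.ne']
  unfold logWeight at h
  linarith

theorem stmt_16_general (h : ℂ → ℂ) (ζ : ℂ) (lam r₁ : ℝ)
    (hh : AnalyticOnNhd ℂ h (Metric.ball (0:ℂ) 1))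
    (hh' : ∀ z ∈ Metric.ball (0:ℂ) 1, deriv h z ≠ 0)
    (hζ : ‖ζ‖ = 1) (hlam : 0 < lam) (hr₁ : 0 ≤ r₁)
    (hre : ∀ η : ℝ, r₁ ≤ η → η < 1 →
      (ζ * deriv (deriv h) ((η:ℂ)*ζ) / deriv h ((η:ℂ)*ζ)).re < (2*η - 2*lam)/(1 - η^2)) :
    ∀ r ρ : ℝ, r₁ ≤ r → r ≤ ρ → ρ < 1 →
      ‖deriv h ((ρ:ℂ)*ζ)‖
          ≤ ((1+r)/(1+ρ)) ^ (1+lam) * ((1-ρ)/(1-r)) ^ (lam-1) * ‖deriv h ((r:ℂ)*ζ)‖ ∧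
      ‖deriv h ((ρ:ℂ)*ζ)‖
          ≤ ((1-ρ)/(1-r)) ^ (lam-1) * ‖deriv h ((r:ℂ)*ζ)‖ := by
  intro r ρ hr hrρ hρ
  have hanti := antitoneOn_log_norm_add_logWeight hh.deriv.differentiableOn hh' hζ.le
    (by linarith) fun η h₁ h₂ => (hre η h₁.le h₂).le
  have hr' : r ∈ Ioo (-1 : ℝ) 1 := ⟨by linarith, by linarith⟩
  have hρ' : ρ ∈ Ioo (-1 : ℝ) 1 := ⟨by linarith, hρ⟩
  have hbound := le_mul_of_log_add_logWeight_le
    (norm_pos_iff.2 (hh' _ (ofReal_mul_mem_ball_zero_one hζ.le hρ')))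
    (norm_pos_iff.2 (hh' _ (ofReal_mul_mem_ball_zero_one hζ.le hr')))
    hr' hρ' (hanti ⟨hr, hr'.2⟩ ⟨hr.trans hrρ, hρ⟩ hrρ)
  have hcoeff : ((1 + r) / (1 + ρ)) ^ (1 + lam) ≤ 1 :=
    Real.rpow_le_one (div_nonneg (by linarith) (by linarith))
      ((div_le_one (by linarith)).2 (by linarith)) (by linarith)
  refine ⟨hbound, hbound.trans (mul_le_mul_of_nonneg_right ?_ (norm_nonneg _))⟩
  exact mul_le_of_le_one_left (Real.rpow_nonneg (div_nonneg (by linarith) (by linarith)) _) hcoeff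

theorem stmt_16 (h : ℂ → ℂ) (ζ : ℂ) (lam r₁ : ℝ)
    (hh : AnalyticOnNhd ℂ h (Metric.ball (0:ℂ) 1))
    (hh' : ∀ z ∈ Metric.ball (0:ℂ) 1, deriv h z ≠ 0)
    (hζ : ‖ζ‖ = 1) (hlam : 0 < lam) (hr₁ : 0 ≤ r₁) (hr₁1 : r₁ < 1)
    (hre : ∀ η : ℝ, r₁ ≤ η → η < 1 →
      (ζ * deriv (deriv h) ((η:ℂ)*ζ) / deriv h ((η:ℂ)*ζ)).re < (2*η - 2*lam)/(1 - η^2)) :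
    ∀ r ρ : ℝ, r₁ ≤ r → r ≤ ρ → ρ < 1 →
      ‖deriv h ((ρ:ℂ)*ζ)‖
          ≤ ((1+r)/(1+ρ)) ^ (1+lam) * ((1-ρ)/(1-r)) ^ (lam-1) * ‖deriv h ((r:ℂ)*ζ)‖ ∧
      ‖deriv h ((ρ:ℂ)*ζ)‖
          ≤ ((1-ρ)/(1-r)) ^ (lam-1) * ‖deriv h ((r:ℂ)*ζ)‖ :=
  stmt_16_general h ζ lam r₁ hh hh' hζ hlam hr₁ hre
end

section
/- Let α > 0 be a constant with the Sheil-Small distortion property, and let f = h + conj∘g ∈ S_H. Then for all z₁, z₂ ∈ 𝔻, setting z = (z₂ − z₁)/(1 − conj(z₁)·z₂), one has ((1−|z|)/(1+|z|))^{α+1}·|h'(z₁)| ≤ |h'(z₂)| ≤ ((1+|z|)/(1−|z|))^{α+1}·|h'(z₁)|. -/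
/-!
Precomposing `f` with the disc automorphism `φ z = (z + z₁) / (1 + z̄₁ z)` and renormalising
gives the Koebe transform `(f ∘ φ - f z₁) / c`, `c = (1 - |z₁|²) h'(z₁)`, whose analytic and
co-analytic parts `H = (h ∘ φ - h z₁) / c` and `(g ∘ φ - g z₁) / c̄` again satisfy the
hypotheses of the distortion theorem. At `w = φ⁻¹ z₂ = (z₂ - z₁) / (1 - z̄₁ z₂)` the chain rule
gives `|h'(z₂)| = |H'(w)| |1 + z̄₁ w|² |h'(z₁)|`, and `1 - |w| ≤ |1 + z̄₁ w| ≤ 1 + |w|`, so the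
bounds on `|H'(w)|` become the claimed bounds on `|h'(z₂)| / |h'(z₁)|`.
-/

open Complex Metric Set ComplexConjugate

lemma one_add_ne_zero_of_norm_lt_one {R : Type*} [NormedRing R] [NormOneClass R] {w : R}
    (hw : ‖w‖ < 1) : 1 + w ≠ 0 := by
  intro h
  rw [eq_neg_of_add_eq_zero_right h, norm_neg, norm_one] at hw
  exact lt_irrefl 1 hw

lemma Complex.one_add_conj_mul_ne_zero {a z : ℂ} (ha : ‖a‖ < 1) (hz : ‖z‖ < 1) :
    1 + conj a * z ≠ 0 :=
  one_add_ne_zero_of_norm_lt_one <| by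
    rw [norm_mul, norm_conj]
    nlinarith [norm_nonneg a, norm_nonneg z]

lemma one_sub_norm_le_norm_one_add_mul {R : Type*} [NormedRing R] [NormOneClass R] {b w : R}
    (hb : ‖b‖ ≤ 1) : 1 - ‖w‖ ≤ ‖1 + b * w‖ ∧ ‖1 + b * w‖ ≤ 1 + ‖w‖ := by
  have hbw : ‖b * w‖ ≤ ‖w‖ :=
    (norm_mul_le b w).trans (mul_le_of_le_one_left (norm_nonneg w) hb)
  constructor
  · have := norm_sub_norm_le (1 : R) (-(b * w))
    simp only [norm_one, norm_neg, sub_neg_eq_add] at this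
    linarith
  · have := norm_add_le (1 : R) (b * w)
    rw [norm_one] at this
    linarith

noncomputable def diskAut (a z : ℂ) : ℂ := (z + a) / (1 + conj a * z)

section diskAut

variable {a z : ℂ}

lemma diskAut_zero : diskAut a 0 = a := by simp [diskAut]

lemma Complex.normSq_one_add_conj_mul_sub_normSq_add (a z : ℂ) :
    normSq (1 + conj a * z) - normSq (z + a) = (1 - normSq a) * (1 - normSq z) := by
  simp only [normSq_apply, add_re, add_im, mul_re, mul_im, one_re, one_im, conj_re, conj_im]
  ring

lemma norm_diskAut_lt_one (ha : ‖a‖ < 1) (hz : ‖z‖ < 1) : ‖diskAut a z‖ < 1 := by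
  have hden := one_add_conj_mul_ne_zero ha hz
  rw [diskAut, norm_div, div_lt_one (norm_pos_iff.mpr hden), ← sq_lt_sq₀ (norm_nonneg _)
    (norm_nonneg _), Complex.sq_norm, Complex.sq_norm, ← sub_pos,
    normSq_one_add_conj_mul_sub_normSq_add, ← Complex.sq_norm, ← Complex.sq_norm]
  apply mul_pos <;> nlinarith [norm_nonneg a, norm_nonneg z]

lemma mapsTo_diskAut (ha : a ∈ ball (0 : ℂ) 1) : MapsTo (diskAut a) (ball 0 1) (ball 0 1) :=
  fun z hz => by
    rw [mem_ball_zero_iff] at *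
    exact norm_diskAut_lt_one ha hz

lemma hasDerivAt_diskAut (hz : 1 + conj a * z ≠ 0) :
    HasDerivAt (diskAut a) ((1 - conj a * a) / (1 + conj a * z) ^ 2) z := by
  have hnum : HasDerivAt (fun u : ℂ => u + a) 1 z := (hasDerivAt_id z).add_const a
  have hden : HasDerivAt (fun u : ℂ => 1 + conj a * u) (conj a) z := by
    simpa using ((hasDerivAt_id z).const_mul (conj a)).const_add 1
  exact (hnum.div hden hz).congr_deriv (by ring)

lemma analyticAt_diskAut (hz : 1 + conj a * z ≠ 0) : AnalyticAt ℂ (diskAut a) z :=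
  (analyticAt_id.add analyticAt_const).div
    (analyticAt_const.add (analyticAt_const.mul analyticAt_id)) hz

lemma Complex.one_sub_conj_mul_self_ne_zero (ha : ‖a‖ < 1) : 1 - conj a * a ≠ 0 := by
  simpa [sub_eq_add_neg] using one_add_conj_mul_ne_zero (a := -a) (by simpa using ha) ha

lemma injOn_diskAut (ha : ‖a‖ < 1) : InjOn (diskAut a) (ball 0 1) := by
  intro x hx y hy hxy
  rw [mem_ball_zero_iff] at hx hy
  rw [diskAut, diskAut, div_eq_div_iff (one_add_conj_mul_ne_zero ha hx)
    (one_add_conj_mul_ne_zero ha hy)] at hxy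
  have : (x - y) * (1 - conj a * a) = 0 := by linear_combination hxy
  exact sub_eq_zero.mp
    ((mul_eq_zero.mp this).resolve_right (one_sub_conj_mul_self_ne_zero ha))

lemma diskAut_diskAut_neg (ha : ‖a‖ < 1) (hz : ‖z‖ < 1) : diskAut a (diskAut (-a) z) = z := by
  have hden : 1 - conj a * z ≠ 0 := by
    simpa [sub_eq_add_neg] using one_add_conj_mul_ne_zero (a := -a) (by simpa using ha) hz
  have hden' :
      1 + conj a * ((z - a) / (1 - conj a * z)) = (1 - conj a * a) / (1 - conj a * z) := by
    field_simp
    ring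
  simp only [diskAut, map_neg, neg_mul, ← sub_eq_add_neg, hden']
  rw [div_add' _ _ _ hden, div_div_div_cancel_right₀ hden,
    div_eq_iff (one_sub_conj_mul_self_ne_zero ha)]
  ring

end diskAut

noncomputable def koebeTransform (F : ℂ → ℂ) (a c z : ℂ) : ℂ := (F (diskAut a z) - F a) / c

section koebeTransform

variable {F h g f : ℂ → ℂ} {a c z : ℂ}

lemma koebeTransform_zero : koebeTransform F a c 0 = 0 := by
  simp [koebeTransform, diskAut_zero]

lemma hasDerivAt_koebeTransform (hF : DifferentiableAt ℂ F (diskAut a z))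
    (hz : 1 + conj a * z ≠ 0) :
    HasDerivAt (koebeTransform F a c)
      (deriv F (diskAut a z) * ((1 - conj a * a) / (1 + conj a * z) ^ 2) / c) z :=
  ((hF.hasDerivAt.comp z (hasDerivAt_diskAut hz)).sub_const (F a)).div_const c

lemma AnalyticOnNhd.koebeTransform (hF : AnalyticOnNhd ℂ F (ball 0 1))
    (ha : a ∈ ball (0 : ℂ) 1) : AnalyticOnNhd ℂ (koebeTransform F a c) (ball 0 1) := by
  intro z hz
  have hden := one_add_conj_mul_ne_zero (mem_ball_zero_iff.mp ha) (mem_ball_zero_iff.mp hz)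
  exact ((hF _ (mapsTo_diskAut ha hz)).comp (analyticAt_diskAut hden)).sub analyticAt_const
    |>.div_const

lemma koebeTransform_add_conj (hf : ∀ z, f z = h z + conj (g z)) :
    koebeTransform h a c z + conj (koebeTransform g a (conj c) z)
      = (f (diskAut a z) - f a) / c := by
  simp only [koebeTransform, hf, map_div₀, map_sub, conj_conj]
  ring

lemma injOn_koebeTransform_add_conj (hf : ∀ z, f z = h z + conj (g z))
    (hinj : InjOn f (ball 0 1)) (ha : a ∈ ball (0 : ℂ) 1) (hc : c ≠ 0) :
    InjOn (fun z => koebeTransform h a c z + conj (koebeTransform g a (conj c) z)) (ball 0 1) := by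
  intro x hx y hy hxy
  simp only [koebeTransform_add_conj hf, div_left_inj' hc, sub_left_inj] at hxy
  exact injOn_diskAut (mem_ball_zero_iff.mp ha) hx hy
    (hinj (mapsTo_diskAut ha hx) (mapsTo_diskAut ha hy) hxy)

lemma norm_deriv_koebeTransform_lt (hh : AnalyticOnNhd ℂ h (ball 0 1))
    (hg : AnalyticOnNhd ℂ g (ball 0 1))
    (hsp : ∀ z ∈ ball (0 : ℂ) 1, ‖deriv g z‖ < ‖deriv h z‖)
    (ha : a ∈ ball (0 : ℂ) 1) (hc : c ≠ 0) (hz : z ∈ ball (0 : ℂ) 1) :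
    ‖deriv (koebeTransform g a (conj c)) z‖ < ‖deriv (koebeTransform h a c) z‖ := by
  have ha' := mem_ball_zero_iff.mp ha
  have hden := one_add_conj_mul_ne_zero ha' (mem_ball_zero_iff.mp hz)
  have hφz := mapsTo_diskAut ha hz
  rw [(hasDerivAt_koebeTransform (hh _ hφz).differentiableAt hden).deriv,
    (hasDerivAt_koebeTransform (hg _ hφz).differentiableAt hden).deriv]
  simp only [norm_div, norm_mul, norm_conj]
  have hφ' : 0 < ‖1 - conj a * a‖ / ‖(1 + conj a * z) ^ 2‖ :=
    div_pos (norm_pos_iff.mpr (one_sub_conj_mul_self_ne_zero ha'))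
      (norm_pos_iff.mpr (pow_ne_zero 2 hden))
  have hc' : 0 < ‖c‖ := norm_pos_iff.mpr hc
  gcongr
  exact hsp _ hφz

lemma deriv_koebeTransform_zero (hh : DifferentiableAt ℂ h a) (ha : ‖a‖ < 1)
    (hh' : deriv h a ≠ 0) :
    deriv (koebeTransform h a ((1 - conj a * a) * deriv h a)) 0 = 1 := by
  have := one_sub_conj_mul_self_ne_zero ha
  rw [(hasDerivAt_koebeTransform (diskAut_zero ▸ hh) (by simp)).deriv, diskAut_zero]
  field_simp
  ring

lemma norm_deriv_eq_norm_deriv_koebeTransform (hh : DifferentiableAt ℂ h (diskAut a z))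
    (ha : ‖a‖ < 1) (hz : 1 + conj a * z ≠ 0) (hh' : deriv h a ≠ 0) :
    ‖deriv h (diskAut a z)‖ = ‖deriv (koebeTransform h a ((1 - conj a * a) * deriv h a)) z‖
      * ‖1 + conj a * z‖ ^ 2 * ‖deriv h a‖ := by
  have := one_sub_conj_mul_self_ne_zero ha
  rw [(hasDerivAt_koebeTransform hh hz).deriv]
  simp only [norm_div, norm_mul, norm_pow]
  field_simp

end koebeTransform

lemma Real.div_rpow_add_one_eq {s t : ℝ} (hs : 0 < s) (ht : 0 < t) (α : ℝ) :
    (s / t) ^ (α + 1) = s ^ (α - 1) / t ^ (α + 1) * s ^ 2 := by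
  rw [Real.div_rpow hs.le ht.le, show α + 1 = α - 1 + (2 : ℕ) by push_cast; ring,
    Real.rpow_add hs, Real.rpow_natCast]
  ring

lemma distortion_bounds_mul_sq {α r X D M : ℝ} (hr₀ : 0 ≤ r) (hr₁ : r < 1) (hM : 0 ≤ M)
    (hX : (1 - r) ^ (α - 1) / (1 + r) ^ (α + 1) ≤ X ∧
      X ≤ (1 + r) ^ (α - 1) / (1 - r) ^ (α + 1))
    (hD : 1 - r ≤ D ∧ D ≤ 1 + r) :
    ((1 - r) / (1 + r)) ^ (α + 1) * M ≤ X * D ^ 2 * M ∧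
      X * D ^ 2 * M ≤ ((1 + r) / (1 - r)) ^ (α + 1) * M := by
  rw [Real.div_rpow_add_one_eq (by linarith) (by linarith),
    Real.div_rpow_add_one_eq (by linarith) (by linarith)]
  obtain ⟨hX₁, hX₂⟩ := hX
  obtain ⟨hD₁, hD₂⟩ := hD
  have hX₀ : 0 ≤ X := le_trans (by positivity) hX₁
  have hD₀ : 0 ≤ D := by linarith
  constructor <;> gcongr

theorem stmt_17_general (α : ℝ) (h g f : ℂ → ℂ)
    (hSS : ∀ H₀ G₀ : ℂ → ℂ, AnalyticOnNhd ℂ H₀ (Metric.ball (0:ℂ) 1) → AnalyticOnNhd ℂ G₀ (Metric.ball (0:ℂ) 1) →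
      Set.InjOn (fun z => H₀ z + (starRingEnd ℂ) (G₀ z)) (Metric.ball (0:ℂ) 1) →
      (∀ z ∈ Metric.ball (0:ℂ) 1, ‖deriv G₀ z‖ < ‖deriv H₀ z‖) →
      H₀ 0 = 0 → G₀ 0 = 0 → deriv H₀ 0 = 1 →
      ∀ z ∈ Metric.ball (0:ℂ) 1,
        (1 - ‖z‖) ^ (α-1) / (1 + ‖z‖) ^ (α+1) ≤ ‖deriv H₀ z‖ ∧
        ‖deriv H₀ z‖ ≤ (1 + ‖z‖) ^ (α-1) / (1 - ‖z‖) ^ (α+1))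
    (hh : AnalyticOnNhd ℂ h (Metric.ball (0:ℂ) 1)) (hg : AnalyticOnNhd ℂ g (Metric.ball (0:ℂ) 1))
    (hf : ∀ z, f z = h z + (starRingEnd ℂ) (g z))
    (finj : Set.InjOn f (Metric.ball (0:ℂ) 1))
    (fsp : ∀ z ∈ Metric.ball (0:ℂ) 1, ‖deriv g z‖ < ‖deriv h z‖)
    :
    ∀ z₁ ∈ Metric.ball (0:ℂ) 1, ∀ z₂ ∈ Metric.ball (0:ℂ) 1,
      ((1 - ‖(z₂ - z₁)/(1 - (starRingEnd ℂ) z₁ * z₂)‖) / (1 + ‖(z₂ - z₁)/(1 - (starRingEnd ℂ) z₁ * z₂)‖)) ^ (α+1) * ‖deriv h z₁‖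
          ≤ ‖deriv h z₂‖ ∧
      ‖deriv h z₂‖
          ≤ ((1 + ‖(z₂ - z₁)/(1 - (starRingEnd ℂ) z₁ * z₂)‖) / (1 - ‖(z₂ - z₁)/(1 - (starRingEnd ℂ) z₁ * z₂)‖)) ^ (α+1) * ‖deriv h z₁‖ := by
  intro z₁ hz₁ z₂ hz₂
  have hz₁' := mem_ball_zero_iff.mp hz₁
  have hz₂' := mem_ball_zero_iff.mp hz₂
  have hh' : deriv h z₁ ≠ 0 := norm_pos_iff.mp ((norm_nonneg _).trans_lt (fsp z₁ hz₁))
  set c := (1 - conj z₁ * z₁) * deriv h z₁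
  have hc : c ≠ 0 := mul_ne_zero (one_sub_conj_mul_self_ne_zero hz₁') hh'
  set w := diskAut (-z₁) z₂
  have hw : w ∈ ball (0 : ℂ) 1 := mapsTo_diskAut (by simpa using hz₁) hz₂
  have hw_eq : (z₂ - z₁) / (1 - conj z₁ * z₂) = w := by
    simp [w, diskAut, sub_eq_add_neg]
  have hden := one_add_conj_mul_ne_zero hz₁' (mem_ball_zero_iff.mp hw)
  have hz₂w : diskAut z₁ w = z₂ := diskAut_diskAut_neg hz₁' hz₂'
  have hX := hSS _ _ (hh.koebeTransform hz₁) (hg.koebeTransform hz₁)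
    (injOn_koebeTransform_add_conj hf finj hz₁ hc) (fun z hz =>
      norm_deriv_koebeTransform_lt hh hg fsp hz₁ hc hz) koebeTransform_zero koebeTransform_zero
    (deriv_koebeTransform_zero (hh z₁ hz₁).differentiableAt hz₁' hh') w hw
  rw [hw_eq, ← hz₂w, norm_deriv_eq_norm_deriv_koebeTransform
    (hz₂w ▸ (hh z₂ hz₂).differentiableAt) hz₁' hden hh']
  exact distortion_bounds_mul_sq (norm_nonneg _) (mem_ball_zero_iff.mp hw) (norm_nonneg _) hX
    (one_sub_norm_le_norm_one_add_mul (by simpa using hz₁'.le))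

theorem stmt_17 (α : ℝ) (h g f : ℂ → ℂ)
    (hα : 0 < α)
    (hSS : ∀ H₀ G₀ : ℂ → ℂ, AnalyticOnNhd ℂ H₀ (Metric.ball (0:ℂ) 1) → AnalyticOnNhd ℂ G₀ (Metric.ball (0:ℂ) 1) →
      Set.InjOn (fun z => H₀ z + (starRingEnd ℂ) (G₀ z)) (Metric.ball (0:ℂ) 1) →
      (∀ z ∈ Metric.ball (0:ℂ) 1, ‖deriv G₀ z‖ < ‖deriv H₀ z‖) →
      H₀ 0 = 0 → G₀ 0 = 0 → deriv H₀ 0 = 1 →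
      ∀ z ∈ Metric.ball (0:ℂ) 1,
        (1 - ‖z‖) ^ (α-1) / (1 + ‖z‖) ^ (α+1) ≤ ‖deriv H₀ z‖ ∧
        ‖deriv H₀ z‖ ≤ (1 + ‖z‖) ^ (α-1) / (1 - ‖z‖) ^ (α+1))
    (hh : AnalyticOnNhd ℂ h (Metric.ball (0:ℂ) 1)) (hg : AnalyticOnNhd ℂ g (Metric.ball (0:ℂ) 1))
    (hf : ∀ z, f z = h z + (starRingEnd ℂ) (g z))
    (finj : Set.InjOn f (Metric.ball (0:ℂ) 1))
    (fsp : ∀ z ∈ Metric.ball (0:ℂ) 1, ‖deriv g z‖ < ‖deriv h z‖)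
    (h0 : h 0 = 0) (g0 : g 0 = 0) (h'1 : deriv h 0 = 1)
    :
    ∀ z₁ ∈ Metric.ball (0:ℂ) 1, ∀ z₂ ∈ Metric.ball (0:ℂ) 1,
      ((1 - ‖(z₂ - z₁)/(1 - (starRingEnd ℂ) z₁ * z₂)‖) / (1 + ‖(z₂ - z₁)/(1 - (starRingEnd ℂ) z₁ * z₂)‖)) ^ (α+1) * ‖deriv h z₁‖
          ≤ ‖deriv h z₂‖ ∧
      ‖deriv h z₂‖
          ≤ ((1 + ‖(z₂ - z₁)/(1 - (starRingEnd ℂ) z₁ * z₂)‖) / (1 - ‖(z₂ - z₁)/(1 - (starRingEnd ℂ) z₁ * z₂)‖)) ^ (α+1) * ‖deriv h z₁‖ :=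
  stmt_17_general α h g f hSS hh hg hf finj fsp
end
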